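/- arXiv:1405.2310 — 2 statements merged into one kernel-verified Lean document; each statement's English description precedes it below -/
import Mathlib

section
/- The Toda potential V₀(r) = e^{-r} + r - 1 is super-quadratic on the negative half-line: the function r ↦ V₀(r)/r² is strictly increasing in |r| for r < 0, i.e., for r₁ < r₂ < 0 one has V₀(r₂)/r₂² < V₀(r₁)/r₁². -/
noncomputable def V₀ : ℝ → ℝ := fun r => Real.exp (-r) + r - 1

/-!
The derivative of `V₀ r / r ^ 2` is `g r / r ^ 3` with `g r = 2 - r - (r + 2) e^{-r}`.
Since `g 0 = 0` and `g' r = (r + 1) e^{-r} - 1 < 0` for `r ≠ 0` (this is `1 + r < e^r`),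
`g` is positive on the negative half-line, where `r ^ 3 < 0`, so the quotient decreases there.
-/

open Real Set

lemma hasDerivAt_V₀ (r : ℝ) : HasDerivAt V₀ (1 - exp (-r)) r :=
  (((hasDerivAt_neg r).exp.add (hasDerivAt_id r)).sub_const 1).congr_deriv (by ring)

lemma add_one_mul_exp_neg_lt_one {r : ℝ} (hr : r ≠ 0) : (r + 1) * exp (-r) < 1 := by
  rw [exp_neg, ← div_eq_mul_inv, div_lt_one (exp_pos r)]
  exact add_one_lt_exp hr

lemma hasDerivAt_two_sub_sub_mul_exp_neg (r : ℝ) :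
    HasDerivAt (fun x => 2 - x - (x + 2) * exp (-x)) ((r + 1) * exp (-r) - 1) r := by
  have h := ((hasDerivAt_const r 2).sub (hasDerivAt_id r)).sub
    (((hasDerivAt_id r).add_const 2).mul (hasDerivAt_neg r).exp)
  exact h.congr_deriv (by simp only [id]; ring)

lemma two_sub_sub_mul_exp_neg_pos {r : ℝ} (hr : r < 0) : 0 < 2 - r - (r + 2) * exp (-r) := by
  have anti : StrictAntiOn (fun x => 2 - x - (x + 2) * exp (-x)) (Iic 0) :=
    strictAntiOn_of_hasDerivWithinAt_neg (convex_Iic 0)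
      (fun x _ => (hasDerivAt_two_sub_sub_mul_exp_neg x).continuousAt.continuousWithinAt)
      (fun x _ => (hasDerivAt_two_sub_sub_mul_exp_neg x).hasDerivWithinAt)
      (fun x hx => sub_neg.2 <| add_one_mul_exp_neg_lt_one <| by
        rw [interior_Iic] at hx; exact hx.ne)
  simpa using anti hr.le (mem_Iic.2 le_rfl) hr

lemma hasDerivAt_V₀_div_sq {r : ℝ} (hr : r ≠ 0) :
    HasDerivAt (fun x => V₀ x / x ^ 2) ((2 - r - (r + 2) * exp (-r)) / r ^ 3) r := by
  refine ((hasDerivAt_V₀ r).div (hasDerivAt_pow 2 r) (pow_ne_zero 2 hr)).congr_deriv ?_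
  simp only [V₀]
  field_simp
  ring

lemma strictAntiOn_V₀_div_sq : StrictAntiOn (fun r => V₀ r / r ^ 2) (Iio 0) :=
  strictAntiOn_of_hasDerivWithinAt_neg (convex_Iio 0)
    (fun x hx => (hasDerivAt_V₀_div_sq (ne_of_lt hx)).continuousAt.continuousWithinAt)
    (fun x hx => (hasDerivAt_V₀_div_sq (mem_Iio.1 (interior_subset hx)).ne).hasDerivWithinAt)
    (fun x hx => by
      rw [interior_Iio] at hx
      exact div_neg_of_pos_of_neg (two_sub_sub_mul_exp_neg_pos hx)
        ((Odd.pow_neg_iff (by decide)).2 hx))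

theorem toda_potential_superquadratic_negative :
    ∀ r₁ r₂ : ℝ, r₁ < r₂ → r₂ < 0 → V₀ r₂ / r₂ ^ 2 < V₀ r₁ / r₁ ^ 2 :=
  fun _ _ h₁₂ h₂ => strictAntiOn_V₀_div_sq (h₁₂.trans h₂) h₂ h₁₂
end

section
/- For 0 < |ζ| < 1 and γ > 0, the Toda soliton profile aₙ = (1/2)·√(1-ζ²+γζ^{2(n-1)})·√(1-ζ²+γζ^{2(n+1)})/(1-ζ²+γζ^{2n}) satisfies sup over n ∈ ℤ of (aₙ - 1/2) ≤ (1-|ζ|)²/(4|ζ|), i.e., the amplitude of the wave is bounded by (|λ|-1)/2 where λ = (ζ+ζ⁻¹)/2. -/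
/-!
With `s = |ζ|`, `c = 1 - s²` and `x = γ ζ^(2(n-1)) > 0`, the three factors of `aₙ` are
`c + x`, `c + x s⁴` and `c + x s²`, and the identity
`(1 + s²)² (c + x s²)² - 4 s² (c + x) (c + x s⁴) = (1 - s²)² (c - x s²)²`
gives `aₙ ≤ (1 + s²) / (4 s)`. Finally `(1 + s²) / (4 s) - 1/2 = (1 - s)² / (4 s)`, and
`(1 + s²) / (2 s)` is exactly `|(ζ + ζ⁻¹) / 2|`.
-/

open Real

lemma four_mul_mul_le_sq (c x t : ℝ) :
    4 * t * ((c + x) * (c + x * t ^ 2)) ≤ ((1 + t) * (c + x * t)) ^ 2 := by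
  have h : ((1 + t) * (c + x * t)) ^ 2 - 4 * t * ((c + x) * (c + x * t ^ 2))
      = ((1 - t) * (c - x * t)) ^ 2 := by ring
  exact sub_nonneg.mp (h ▸ sq_nonneg _)

lemma sqrt_mul_sqrt_le {c x s : ℝ} (hc : 0 < c) (hx : 0 ≤ x) (hs : 0 < s) :
    √(c + x) * √(c + x * (s ^ 2) ^ 2) ≤ (1 + s ^ 2) * (c + x * s ^ 2) / (2 * s) := by
  rw [← sqrt_mul (by positivity), sqrt_le_left (by positivity), div_pow,
    le_div_iff₀ (by positivity)]
  linarith [four_mul_mul_le_sq c x (s ^ 2)]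

lemma half_sqrt_mul_sqrt_div_le {c x s : ℝ} (hc : 0 < c) (hx : 0 ≤ x) (hs : 0 < s) :
    1 / 2 * √(c + x) * √(c + x * (s ^ 2) ^ 2) / (c + x * s ^ 2) ≤ (1 + s ^ 2) / (4 * s) := by
  have hd : 0 < c + x * s ^ 2 := by positivity
  calc 1 / 2 * √(c + x) * √(c + x * (s ^ 2) ^ 2) / (c + x * s ^ 2)
      = √(c + x) * √(c + x * (s ^ 2) ^ 2) / (2 * (c + x * s ^ 2)) := by field_simp
    _ ≤ (1 + s ^ 2) * (c + x * s ^ 2) / (2 * s) / (2 * (c + x * s ^ 2)) := by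
      gcongr
      exact sqrt_mul_sqrt_le hc hx hs
    _ = (1 + s ^ 2) / (4 * s) := by field_simp; ring

lemma one_add_sq_div_sub_half {s : ℝ} (hs : s ≠ 0) :
    (1 + s ^ 2) / (4 * s) - 1 / 2 = (1 - s) ^ 2 / (4 * s) := by
  field_simp
  ring

lemma abs_add_inv_div_two (ζ : ℝ) : |(ζ + ζ⁻¹) / 2| = (1 + |ζ| ^ 2) / (2 * |ζ|) := by
  rcases eq_or_ne ζ 0 with rfl | hζ
  · simp
  have h : (ζ + ζ⁻¹) / 2 = (1 + ζ ^ 2) / (2 * ζ) := by field_simp; ring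
  rw [h, abs_div, abs_of_pos (by positivity : 0 < 1 + ζ ^ 2), abs_mul, sq_abs, abs_two]

/-- The amplitude of the Toda soliton profile is bounded by `(1-|ζ|)²/(4|ζ|) = (|λ|-1)/2`. -/
theorem toda_soliton_amplitude
    (ζ γ : ℝ) (hζ : ζ ∈ Set.Ioo (-1 : ℝ) 1) (hζ0 : ζ ≠ 0) (hγ : 0 < γ)
    (a : ℤ → ℝ)
    (ha : ∀ n : ℤ, a n = (1/2) *
      Real.sqrt (1 - ζ^2 + γ * ζ ^ (2*(n-1))) * Real.sqrt (1 - ζ^2 + γ * ζ ^ (2*(n+1)))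
        / (1 - ζ^2 + γ * ζ ^ (2*n))) :
    (∀ n : ℤ, a n - 1/2 ≤ (1 - |ζ|)^2 / (4 * |ζ|)) ∧
    (1 - |ζ|)^2 / (4 * |ζ|) = (|(ζ + ζ⁻¹)/2| - 1) / 2 := by
  have hs : 0 < |ζ| := abs_pos.mpr hζ0
  have hc : 0 < 1 - |ζ| ^ 2 := by nlinarith [abs_lt.mpr hζ]
  rw [← one_add_sq_div_sub_half hs.ne', abs_add_inv_div_two]
  refine ⟨fun n => ?_, by ring⟩
  have hx : 0 ≤ γ * ζ ^ (2 * (n - 1)) :=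
    mul_nonneg hγ.le (Even.zpow_pos (even_two_mul _) hζ0).le
  have hprev : ζ ^ (2 * n) = ζ ^ (2 * (n - 1)) * ζ ^ 2 := by
    rw [← zpow_natCast, ← zpow_add₀ hζ0]; ring_nf
  have hnext : ζ ^ (2 * (n + 1)) = ζ ^ (2 * (n - 1)) * (ζ ^ 2) ^ 2 := by
    rw [← pow_mul, ← zpow_natCast, ← zpow_add₀ hζ0]; ring_nf
  have hprofile := half_sqrt_mul_sqrt_div_le hc hx hs
  rw [sq_abs] at hprofile ⊢
  rw [ha n, hprev, hnext, ← mul_assoc, ← mul_assoc]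
  linarith
end
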